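/- Let A be a positive definite hermitian n×n matrix and ρ a positive semidefinite n×n matrix. Then the matrix L_A(ρ) is positive semidefinite; moreover, if ρ is positive definite then L_A(ρ) is positive definite. -/

import Mathlib

open Matrix
open scoped ComplexOrder

noncomputable def traceNorm {ι : Type*} [Fintype ι] [DecidableEq ι]
    (A : Matrix ι ι ℂ) : ℝ :=
  (((Matrix.posSemidef_conjTranspose_mul_self A).1.eigenvectorUnitary.1 *
      Matrix.diagonal ((fun x : ℝ => (x : ℂ)) ∘ Real.sqrt ∘ (Matrix.posSemidef_conjTranspose_mul_self A).1.eigenvalues) *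
      (star (Matrix.posSemidef_conjTranspose_mul_self A).1.eigenvectorUnitary : Matrix ι ι ℂ)).trace).re

noncomputable def mfun {ι : Type*} [Fintype ι] [DecidableEq ι] (g : ℝ → ℝ)
    (A : Matrix ι ι ℂ) : Matrix ι ι ℂ :=
  if hA : A.IsHermitian then
    (hA.eigenvectorUnitary : Matrix ι ι ℂ) *
      Matrix.diagonal (fun i => (g (hA.eigenvalues i) : ℂ)) *
      (star hA.eigenvectorUnitary : Matrix ι ι ℂ)
  else 0

noncomputable def divDiff {ι : Type*} (g : ℝ → ℝ) (a : ι → ℝ) : Matrix ι ι ℝ :=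
  Matrix.of fun i j =>
    if a i = a j then deriv g (a i) else (g (a i) - g (a j)) / (a i - a j)

noncomputable def Dop {ι : Type*} [Fintype ι] [DecidableEq ι] (g : ℝ → ℝ)
    {A : Matrix ι ι ℂ} (hA : A.IsHermitian) (B : Matrix ι ι ℂ) : Matrix ι ι ℂ :=
  (hA.eigenvectorUnitary : Matrix ι ι ℂ) *
    (((divDiff g hA.eigenvalues).map Complex.ofReal) ⊙
      ((star hA.eigenvectorUnitary : Matrix ι ι ℂ) * B *
        (hA.eigenvectorUnitary : Matrix ι ι ℂ))) *
    (star hA.eigenvectorUnitary : Matrix ι ι ℂ)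

noncomputable def relEnt {ι : Type*} [Fintype ι] [DecidableEq ι]
    (ρ σ : Matrix ι ι ℂ) : ℝ :=
  ((ρ * (mfun Real.log ρ - mfun Real.log σ)).trace).re

def ptrans {m n : Type*} (A : Matrix (m × n) (m × n) ℂ) : Matrix (m × n) (m × n) ℂ :=
  Matrix.of fun p q => A (p.1, q.2) (q.1, p.2)

/-!
For `a, b > 0`, `(log a - log b) / (a - b) = ∫₀¹ (a (1 - u) + u)⁻¹ (b (1 - u) + u)⁻¹ du`
(read as `a⁻¹` when `a = b`). Hence the Loewner matrix `T` of `log` at the eigenvalues of `A` is a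
Gram matrix in `L²[0, 1]`: it is positive semidefinite, with positive diagonal `aᵢ⁻¹`.
`L_A(ρ)` is a unitary conjugate of `T ∘ (Uᴴ ρ U)`, so the Schur product theorem gives the first
claim. For the second, writing `T = Bᴴ B` turns the quadratic form of `T ∘ M` at `x` into
`∑ₖ (bₖ ∘ x)ᴴ M (bₖ ∘ x)`, and a nonzero diagonal entry `Tᵢᵢ = ∑ₖ |bₖᵢ|²` makes some `bₖ ∘ x`
nonzero as soon as `xᵢ ≠ 0`.
-/

open MeasureTheory Set
open scoped ComplexConjugate MatrixOrder

namespace Matrix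

lemma star_dotProduct_conjTranspose_mul_self_hadamard_mulVec {m n R : Type*} [Fintype m] [Fintype n]
    [CommRing R] [StarRing R] (B : Matrix m n R) (M : Matrix n n R) (x : n → R) :
    star x ⬝ᵥ (((Bᴴ * B) ⊙ M) *ᵥ x) =
      ∑ k, star (fun i => B k i * x i) ⬝ᵥ (M *ᵥ fun i => B k i * x i) := by
  simp only [dotProduct, mulVec, hadamard_apply, mul_apply, conjTranspose_apply, Pi.star_apply,
    star_mul', Finset.mul_sum, Finset.sum_mul]
  conv_lhs => enter [2, i]; rw [Finset.sum_comm]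
  rw [Finset.sum_comm]
  exact Finset.sum_congr rfl fun k _ => Finset.sum_congr rfl fun i _ =>
    Finset.sum_congr rfl fun j _ => by ring

lemma PosSemidef.hadamard_posDef {n 𝕜 : Type*} [Fintype n] [RCLike 𝕜] {T M : Matrix n n 𝕜}
    (hT : T.PosSemidef) (hdiag : ∀ i, T i i ≠ 0) (hM : M.PosDef) : (T ⊙ M).PosDef := by
  classical
  obtain ⟨B, rfl⟩ := CStarAlgebra.nonneg_iff_eq_star_mul_self.mp hT.nonneg
  refine PosDef.of_dotProduct_mulVec_pos (hT.isHermitian.hadamard hM.isHermitian) fun x hx => ?_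
  rw [star_eq_conjTranspose, star_dotProduct_conjTranspose_mul_self_hadamard_mulVec]
  obtain ⟨i, hi⟩ := Function.ne_iff.mp hx
  obtain ⟨k, -, hk⟩ := Finset.exists_ne_zero_of_sum_ne_zero (hdiag i)
  refine Finset.sum_pos' (fun k _ => hM.posSemidef.dotProduct_mulVec_nonneg _)
    ⟨k, Finset.mem_univ k, hM.dotProduct_mulVec_pos ?_⟩
  exact Function.ne_iff.mpr ⟨i, mul_ne_zero (right_ne_zero_of_mul hk) hi⟩

end Matrix

lemma ContinuousOn.memLp_isCompact {X E : Type*} [TopologicalSpace X] [T2Space X]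
    [MeasurableSpace X] [OpensMeasurableSpace X] [NormedAddCommGroup E]
    [SecondCountableTopologyEither X E] {μ : Measure X}
    [IsFiniteMeasureOnCompacts μ] {s : Set X} (hs : IsCompact s) {f : X → E}
    (hf : ContinuousOn f s) (p : ENNReal) : MemLp f p (μ.restrict s) := by
  obtain ⟨C, hC⟩ := hs.exists_bound_of_continuousOn hf
  have : IsFiniteMeasure (μ.restrict s) := isFiniteMeasure_restrict.mpr hs.measure_lt_top.ne
  exact (memLp_top_of_bound (hf.aestronglyMeasurable hs.measurableSet) C
    ((ae_restrict_iff' hs.measurableSet).mpr (ae_of_all _ hC))).mono_exponent le_top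

lemma MeasureTheory.posSemidef_integral_conj_mul {α ι 𝕜 : Type*} [MeasurableSpace α]
    [Finite ι] [RCLike 𝕜] {μ : Measure α} {f : ι → α → 𝕜} (hf : ∀ i, MemLp (f i) 2 μ) :
    (Matrix.of fun i j => ∫ x, conj (f i x) * f j x ∂μ).PosSemidef := by
  convert posSemidef_gram 𝕜 fun i => (hf i).toLp (f i) using 1
  ext i j
  rw [gram_apply, L2.inner_def]
  refine integral_congr_ae ?_
  filter_upwards [(hf i).coeFn_toLp, (hf j).coeFn_toLp] with x hi hj
  simp [hi, hj, mul_comm]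

lemma mul_one_sub_add_pos {a u : ℝ} (ha : 0 < a) (hu : u ∈ Icc (0:ℝ) 1) :
    0 < a * (1 - u) + u := by
  rcases hu.1.eq_or_lt with rfl | hu0
  · simpa using ha
  · nlinarith [hu.2]

lemma mul_one_sub_add_ne_zero {a u : ℝ} (ha : 0 < a) (hu : u ∈ uIcc (0:ℝ) 1) :
    a * (1 - u) + u ≠ 0 :=
  (mul_one_sub_add_pos ha (by simpa using hu)).ne'

lemma hasDerivAt_mul_one_sub_add (a u : ℝ) :
    HasDerivAt (fun u => a * (1 - u) + u) (1 - a) u :=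
  ((((hasDerivAt_id' u).const_sub 1).const_mul a).add (hasDerivAt_id' u)).congr_deriv (by ring)

lemma intervalIntegrable_inv_mul_one_sub_add_mul_inv {a b : ℝ} (ha : 0 < a) (hb : 0 < b) :
    IntervalIntegrable (fun u => (a * (1 - u) + u)⁻¹ * (b * (1 - u) + u)⁻¹) volume 0 1 :=
  ContinuousOn.intervalIntegrable <|
    (ContinuousOn.inv₀ (by fun_prop) fun _ => mul_one_sub_add_ne_zero ha).mul
      (ContinuousOn.inv₀ (by fun_prop) fun _ => mul_one_sub_add_ne_zero hb)

lemma integral_inv_mul_one_sub_add_mul_self {a : ℝ} (ha : 0 < a) :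
    ∫ u in (0:ℝ)..1, (a * (1 - u) + u)⁻¹ * (a * (1 - u) + u)⁻¹ = a⁻¹ := by
  have hA : ∀ u ∈ uIcc (0:ℝ) 1, a * (1 - u) + u ≠ 0 := fun _ => mul_one_sub_add_ne_zero ha
  have hF : ∀ u ∈ uIcc (0:ℝ) 1, HasDerivAt (fun u => u / (a * (a * (1 - u) + u)))
      ((a * (1 - u) + u)⁻¹ * (a * (1 - u) + u)⁻¹) u := fun u hu => by
    refine ((hasDerivAt_id' u).div ((hasDerivAt_mul_one_sub_add a u).const_mul a)
      (mul_ne_zero ha.ne' (hA u hu))).congr_deriv ?_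
    field_simp [hA u hu]
    ring
  rw [intervalIntegral.integral_eq_sub_of_hasDerivAt hF]
  · simp
  · exact intervalIntegrable_inv_mul_one_sub_add_mul_inv ha ha

lemma integral_inv_mul_one_sub_add_mul_inv {a b : ℝ} (ha : 0 < a) (hb : 0 < b) (hab : a ≠ b) :
    ∫ u in (0:ℝ)..1, (a * (1 - u) + u)⁻¹ * (b * (1 - u) + u)⁻¹ =
      (Real.log a - Real.log b) / (a - b) := by
  have hA : ∀ u ∈ uIcc (0:ℝ) 1, a * (1 - u) + u ≠ 0 := fun _ => mul_one_sub_add_ne_zero ha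
  have hB : ∀ u ∈ uIcc (0:ℝ) 1, b * (1 - u) + u ≠ 0 := fun _ => mul_one_sub_add_ne_zero hb
  have hba : b - a ≠ 0 := sub_ne_zero.mpr hab.symm
  have hF : ∀ u ∈ uIcc (0:ℝ) 1, HasDerivAt
      (fun u => (Real.log (a * (1 - u) + u) - Real.log (b * (1 - u) + u)) / (b - a))
      ((a * (1 - u) + u)⁻¹ * (b * (1 - u) + u)⁻¹) u := fun u hu => by
    refine ((((hasDerivAt_mul_one_sub_add a u).log (hA u hu)).sub
      ((hasDerivAt_mul_one_sub_add b u).log (hB u hu))).div_const (b - a)).congr_deriv ?_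
    have key : (1 - a) * (b * (1 - u) + u) - (a * (1 - u) + u) * (1 - b) = b - a := by ring
    rw [div_sub_div _ _ (hA u hu) (hB u hu), key, div_div_cancel_left' hba, mul_inv]
  rw [intervalIntegral.integral_eq_sub_of_hasDerivAt hF]
  · simp only [mul_zero, sub_zero, sub_self, zero_add, mul_one, add_zero, Real.log_one]
    rw [zero_div, zero_sub, ← div_neg, neg_sub]
  · exact intervalIntegrable_inv_mul_one_sub_add_mul_inv ha hb

lemma divDiff_log_apply_self {ι : Type*} (a : ι → ℝ) (i : ι) :
    divDiff Real.log a i i = (a i)⁻¹ := by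
  simp [divDiff, Real.deriv_log]

lemma divDiff_log_apply {ι : Type*} {a : ι → ℝ} (ha : ∀ i, 0 < a i) (i j : ι) :
    divDiff Real.log a i j =
      ∫ u in (0:ℝ)..1, (a i * (1 - u) + u)⁻¹ * (a j * (1 - u) + u)⁻¹ := by
  by_cases h : a i = a j
  · simp only [divDiff, of_apply, if_pos h, Real.deriv_log]
    rw [← h, integral_inv_mul_one_sub_add_mul_self (ha i)]
  · simp only [divDiff, of_apply, if_neg h]
    rw [integral_inv_mul_one_sub_add_mul_inv (ha i) (ha j) h]

lemma posSemidef_divDiff_log {ι : Type*} [Finite ι] {a : ι → ℝ} (ha : ∀ i, 0 < a i) :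
    ((divDiff Real.log a).map Complex.ofReal).PosSemidef := by
  set f : ι → ℝ → ℂ := fun i u => ((a i * (1 - u) + u)⁻¹ : ℝ)
  have hf : ∀ i, MemLp (f i) 2 (volume.restrict (Icc 0 1)) := fun i =>
    ContinuousOn.memLp_isCompact isCompact_Icc (Complex.continuous_ofReal.comp_continuousOn
      (ContinuousOn.inv₀ (by fun_prop) fun u hu => (mul_one_sub_add_pos (ha i) hu).ne')) 2
  have hT : (divDiff Real.log a).map Complex.ofReal =
      Matrix.of fun i j => ∫ u in Icc 0 1, conj (f i u) * f j u := by
    ext i j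
    simp only [map_apply, divDiff_log_apply ha, intervalIntegral.integral_of_le zero_le_one,
      ← integral_Icc_eq_integral_Ioc, f, Complex.conj_ofReal, ← Complex.ofReal_mul, of_apply]
    exact integral_ofReal.symm
  rw [hT]
  exact posSemidef_integral_conj_mul hf

section Dop

variable {ι : Type*} [Fintype ι] [DecidableEq ι] {g : ℝ → ℝ} {A B : Matrix ι ι ℂ}

theorem posSemidef_Dop (hA : A.IsHermitian)
    (hT : ((divDiff g hA.eigenvalues).map Complex.ofReal).PosSemidef) (hB : B.PosSemidef) :
    (Dop g hA B).PosSemidef := by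
  have hU := Unitary.isUnit_coe (U := hA.eigenvectorUnitary)
  rw [Dop, hU.posSemidef_star_right_conjugate_iff]
  exact hT.hadamard (hU.posSemidef_star_left_conjugate_iff.mpr hB)

theorem posDef_Dop (hA : A.IsHermitian)
    (hT : ((divDiff g hA.eigenvalues).map Complex.ofReal).PosSemidef)
    (hdiag : ∀ i, divDiff g hA.eigenvalues i i ≠ 0) (hB : B.PosDef) : (Dop g hA B).PosDef := by
  have hU := Unitary.isUnit_coe (U := hA.eigenvectorUnitary)
  rw [Dop, IsUnit.posDef_star_right_conjugate_iff hU]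
  exact hT.hadamard_posDef (fun i => Complex.ofReal_ne_zero.mpr (hdiag i))
    ((IsUnit.posDef_star_left_conjugate_iff hU).mpr hB)

end Dop

theorem Lop_posSemidef
    {N : ℕ} (A ρ : Matrix (Fin N) (Fin N) ℂ) (hA : A.PosDef) (hρ : ρ.PosSemidef) :
    (Dop Real.log hA.1 ρ).PosSemidef ∧
      (ρ.PosDef → (Dop Real.log hA.1 ρ).PosDef) := by
  have hpos := hA.eigenvalues_pos
  have hT := posSemidef_divDiff_log hpos
  have hdiag : ∀ i, divDiff Real.log hA.1.eigenvalues i i ≠ 0 := fun i => by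
    simpa [divDiff_log_apply_self] using (hpos i).ne'
  exact ⟨posSemidef_Dop hA.1 hT hρ, fun hρ' => posDef_Dop hA.1 hT hdiag hρ'⟩
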